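/- There exists a surjective k-algebra homomorphism φ : Cl(Q) → A with φ(ι(e₀)) = a, φ(ι(e₁)) = b, φ(ι(e₂)) = c, whose kernel is the two-sided ideal of Cl(Q) generated by the single element ι(e₀)ι(e₁) − ι(e₁)ι(e₀) − 2·ι(e₂)³; consequently A is isomorphic as a k-algebra to Cl(Q)/(ab − ba − 2c³). -/

import Mathlib

/-- The relations `ac + ca = 0`, `bc + cb = 0`, `ab - ba - 2c³ = 0` on the free
associative algebra `k⟨a,b,c⟩`; quotienting by the ring congruence they generate
is the quotient by the two-sided ideal generated by these three elements. -/
inductive CdvRel (k : Type*) [Field k] :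
    FreeAlgebra k (Fin 3) → FreeAlgebra k (Fin 3) → Prop
  | ac : CdvRel k (FreeAlgebra.ι k 0 * FreeAlgebra.ι k 2
      + FreeAlgebra.ι k 2 * FreeAlgebra.ι k 0) 0
  | bc : CdvRel k (FreeAlgebra.ι k 1 * FreeAlgebra.ι k 2
      + FreeAlgebra.ι k 2 * FreeAlgebra.ι k 1) 0
  | ab : CdvRel k (FreeAlgebra.ι k 0 * FreeAlgebra.ι k 1
      - FreeAlgebra.ι k 1 * FreeAlgebra.ι k 0 - 2 * FreeAlgebra.ι k 2 ^ 3) 0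

/-- The algebra `A = k⟨a,b,c⟩/(ac + ca, bc + cb, ab - ba - 2c³)`. -/
abbrev CdvAlgebra (k : Type*) [Field k] : Type _ := RingQuot (CdvRel k)

/-- The images of the generators `a`, `b`, `c` in `A`. -/
noncomputable def cdvGen (k : Type*) [Field k] (i : Fin 3) : CdvAlgebra k :=
  RingQuot.mkAlgHom k (CdvRel k) (FreeAlgebra.ι k i)

set_option synthInstance.maxHeartbeats 1000000
set_option maxHeartbeats 1000000

open MvPolynomial

/-- `Z = k[x,y,z,t]/(z² - 4xy - 4t³)`. -/
abbrev CdvBase (k : Type*) [Field k] : Type _ :=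
  MvPolynomial (Fin 4) k ⧸
    Ideal.span {(X 2 ^ 2 - 4 * X 0 * X 1 - 4 * X 3 ^ 3 : MvPolynomial (Fin 4) k)}

/-- The images of the variables `x, y, z, t` in `Z = k[x,y,z,t]/(z² - 4xy - 4t³)`. -/
noncomputable def cdvBaseGen (k : Type*) [Field k] (i : Fin 4) : CdvBase k :=
  Ideal.Quotient.mk _ (X i)

/-! ### Auxiliary noncommutative ring identities -/

section Identities
variable {R : Type*} [Ring R] (a b c u v w : R)

lemma cdv_id_aab (hu : u = a*b - b*a - 2*c^3) (hv : v = a*c + c*a) :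
    a*a*b - b*(a*a) = a*u + u*a + 2*(c*c*v) - 2*(c*v*c) + 2*(v*c*c) := by
  subst hu hv; noncomm_ring

lemma cdv_id_aac (hv : v = a*c + c*a) : a*a*c - c*(a*a) = a*v - v*a := by
  subst hv; noncomm_ring

lemma cdv_id_bba (hu : u = a*b - b*a - 2*c^3) (hw : w = b*c + c*b) :
    b*b*a - a*(b*b) = -(u*b) - b*u - 2*(c*c*w) + 2*(c*w*c) - 2*(w*c*c) := by
  subst hu hw; noncomm_ring

lemma cdv_id_bbc (hw : w = b*c + c*b) : b*b*c - c*(b*b) = b*w - w*b := by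
  subst hw; noncomm_ring

lemma cdv_id_cca (hv : v = a*c + c*a) : c*c*a - a*(c*c) = c*v - v*c := by
  subst hv; noncomm_ring

lemma cdv_id_ccb (hw : w = b*c + c*b) : c*c*b - b*(c*c) = c*w - w*c := by
  subst hw; noncomm_ring

lemma cdv_id_zc (hv : v = a*c + c*a) (hw : w = b*c + c*b) :
    (a*b + b*a)*c - c*(a*b + b*a) = a*w - w*a + b*v - v*b := by
  subst hv hw; noncomm_ring

lemma cdv_id_main (hu : u = a*b - b*a - 2*c^3) (hv : v = a*c + c*a) (hw : w = b*c + c*b) :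
    (a*b+b*a)*(a*b+b*a) - 4*(a*a*(b*b)) - 4*(c*c*(c*c*(c*c))) =
      u*a*b + u*b*a + 2*(b*a*u) + 4*(b*u*a) - 4*(a*u*b) + 2*(c*c*v*b) + 2*(c*c*w*a)
      + 8*(b*c*c*v) - 4*(u*a*b) - 8*(a*c*c*w) - 2*(c*v*c*b) - 2*(c*w*c*a) - 8*(b*c*v*c)
      - 4*(b*a*u) - 8*(c*c*v*b) + 8*(a*c*w*c) + 2*(v*c*c*b) + 2*(w*c*c*a) + 8*(b*v*c*c)
      - 4*(b*u*a) + 8*(c*v*c*b) - 8*(a*w*c*c) - 2*(a*c*c*w) - 10*(b*c*c*v) - 8*(v*c*c*b)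
      + 8*(u*c*c*c) + 2*(a*c*w*c) + 10*(b*c*v*c) + 8*(a*c*c*w) - 2*(a*w*c*c)
      - 10*(b*v*c*c) - 8*(a*c*w*c) + 2*(u*c*c*c) + 8*(a*w*c*c) - 8*(u*c*c*c) := by
  subst hu hv hw; noncomm_ring

lemma cdv_expand_sq (α β γ a b c : R)
    (hα : ∀ r, α * r = r * α) (hβ : ∀ r, β * r = r * β) (hγ : ∀ r, γ * r = r * γ) :
    (α*a + β*b + γ*c) * (α*a + β*b + γ*c)
      = α*α*(a*a) + α*β*(a*b+b*a) + α*γ*(a*c+c*a) + β*β*(b*b) + β*γ*(b*c+c*b) + γ*γ*(c*c) := by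
  have key : ∀ (p q u w : R), (∀ r, q * r = r * q) → p*u*(q*w) = p*q*(u*w) := by
    intro p q u w h
    rw [mul_assoc p u (q*w), ← mul_assoc u q w, ← h u, mul_assoc q u w, ← mul_assoc p q (u*w)]
  simp only [add_mul, mul_add]
  rw [key α α a a hα, key α β a b hβ, key α γ a c hγ,
      key β α b a hα, key β β b b hβ, key β γ b c hγ,
      key γ α c a hα, key γ β c b hβ, key γ γ c c hγ]
  rw [show β*α = α*β from (hα β).symm, show γ*α = α*γ from (hα γ).symm,
      show γ*β = β*γ from (hβ γ).symm]
  noncomm_ring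

end Identities

/-! ### The structure of `A` -/

namespace CdvAux

variable (k : Type*) [Field k]

lemma rel_v : cdvGen k 0 * cdvGen k 2 + cdvGen k 2 * cdvGen k 0 = 0 := by
  have h := RingQuot.mkAlgHom_rel k (CdvRel.ac (k := k))
  simpa [cdvGen, map_ofNat] using h

lemma rel_w : cdvGen k 1 * cdvGen k 2 + cdvGen k 2 * cdvGen k 1 = 0 := by
  have h := RingQuot.mkAlgHom_rel k (CdvRel.bc (k := k))
  simpa [cdvGen, map_ofNat] using h

lemma rel_u : cdvGen k 0 * cdvGen k 1 - cdvGen k 1 * cdvGen k 0 - 2 * cdvGen k 2 ^ 3 = 0 := by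
  have h := RingQuot.mkAlgHom_rel k (CdvRel.ab (k := k))
  simpa [cdvGen, map_ofNat] using h

lemma comm_gen_of_zero {x : CdvAlgebra k} (h : ∀ i, x * cdvGen k i = cdvGen k i * x) :
    ∀ y : CdvAlgebra k, x * y = y * x := by
  intro y
  obtain ⟨p, rfl⟩ := RingQuot.mkAlgHom_surjective k (CdvRel k) y
  induction p using FreeAlgebra.induction with
  | grade0 r =>
      rw [AlgHom.commutes]
      exact (Algebra.commutes r x).symm
  | grade1 i => exact h i
  | mul p q hp hq => rw [map_mul, ← mul_assoc, hp, mul_assoc, hq, mul_assoc]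
  | add p q hp hq => rw [map_add, mul_add, add_mul, hp, hq]

lemma haab : cdvGen k 0 * cdvGen k 0 * cdvGen k 1 = cdvGen k 1 * (cdvGen k 0 * cdvGen k 0) := by
  have hb := cdv_id_aab (cdvGen k 0) (cdvGen k 1) (cdvGen k 2) _ _ rfl rfl
  rw [rel_u, rel_v] at hb
  exact sub_eq_zero.mp (by simpa using hb)

lemma haac : cdvGen k 0 * cdvGen k 0 * cdvGen k 2 = cdvGen k 2 * (cdvGen k 0 * cdvGen k 0) := by
  have hc := cdv_id_aac (cdvGen k 0) (cdvGen k 2) _ rfl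
  rw [rel_v] at hc
  exact sub_eq_zero.mp (by simpa using hc)

lemma hbba : cdvGen k 1 * cdvGen k 1 * cdvGen k 0 = cdvGen k 0 * (cdvGen k 1 * cdvGen k 1) := by
  have h := cdv_id_bba (cdvGen k 0) (cdvGen k 1) (cdvGen k 2) _ _ rfl rfl
  rw [rel_u, rel_w] at h
  exact sub_eq_zero.mp (by simpa using h)

lemma hbbc : cdvGen k 1 * cdvGen k 1 * cdvGen k 2 = cdvGen k 2 * (cdvGen k 1 * cdvGen k 1) := by
  have h := cdv_id_bbc (cdvGen k 1) (cdvGen k 2) _ rfl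
  rw [rel_w] at h
  exact sub_eq_zero.mp (by simpa using h)

lemma hcca : cdvGen k 2 * cdvGen k 2 * cdvGen k 0 = cdvGen k 0 * (cdvGen k 2 * cdvGen k 2) := by
  have h := cdv_id_cca (cdvGen k 0) (cdvGen k 2) _ rfl
  rw [rel_v] at h
  exact sub_eq_zero.mp (by simpa using h)

lemma hccb : cdvGen k 2 * cdvGen k 2 * cdvGen k 1 = cdvGen k 1 * (cdvGen k 2 * cdvGen k 2) := by
  have h := cdv_id_ccb (cdvGen k 1) (cdvGen k 2) _ rfl
  rw [rel_w] at h
  exact sub_eq_zero.mp (by simpa using h)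

lemma hzc : (cdvGen k 0 * cdvGen k 1 + cdvGen k 1 * cdvGen k 0) * cdvGen k 2
    = cdvGen k 2 * (cdvGen k 0 * cdvGen k 1 + cdvGen k 1 * cdvGen k 0) := by
  have h := cdv_id_zc (cdvGen k 0) (cdvGen k 1) (cdvGen k 2) _ _ rfl rfl
  rw [rel_v, rel_w] at h
  exact sub_eq_zero.mp (by simpa using h)

lemma comm_aa : ∀ y : CdvAlgebra k, (cdvGen k 0 * cdvGen k 0) * y = y * (cdvGen k 0 * cdvGen k 0) := by
  refine comm_gen_of_zero k fun i => ?_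
  fin_cases i
  · noncomm_ring
  · exact haab k
  · exact haac k

lemma comm_bb : ∀ y : CdvAlgebra k, (cdvGen k 1 * cdvGen k 1) * y = y * (cdvGen k 1 * cdvGen k 1) := by
  refine comm_gen_of_zero k fun i => ?_
  fin_cases i
  · exact hbba k
  · noncomm_ring
  · exact hbbc k

lemma comm_cc : ∀ y : CdvAlgebra k, (cdvGen k 2 * cdvGen k 2) * y = y * (cdvGen k 2 * cdvGen k 2) := by
  refine comm_gen_of_zero k fun i => ?_
  fin_cases i
  · exact hcca k
  · exact hccb k
  · noncomm_ring

lemma comm_z : ∀ y : CdvAlgebra k,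
    (cdvGen k 0 * cdvGen k 1 + cdvGen k 1 * cdvGen k 0) * y
      = y * (cdvGen k 0 * cdvGen k 1 + cdvGen k 1 * cdvGen k 0) := by
  refine comm_gen_of_zero k fun i => ?_
  fin_cases i
  · have e : (cdvGen k 0 * cdvGen k 1 + cdvGen k 1 * cdvGen k 0) * cdvGen k 0
        - cdvGen k 0 * (cdvGen k 0 * cdvGen k 1 + cdvGen k 1 * cdvGen k 0)
        = cdvGen k 1 * (cdvGen k 0 * cdvGen k 0) - cdvGen k 0 * cdvGen k 0 * cdvGen k 1 := by
      noncomm_ring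
    exact sub_eq_zero.mp (e.trans (by rw [haab k, sub_self]))
  · have e : (cdvGen k 0 * cdvGen k 1 + cdvGen k 1 * cdvGen k 0) * cdvGen k 1
        - cdvGen k 1 * (cdvGen k 0 * cdvGen k 1 + cdvGen k 1 * cdvGen k 0)
        = cdvGen k 0 * (cdvGen k 1 * cdvGen k 1) - cdvGen k 1 * cdvGen k 1 * cdvGen k 0 := by
      noncomm_ring
    exact sub_eq_zero.mp (e.trans (by rw [hbba k, sub_self]))
  · exact hzc k

/-- The four central elements `a², b², ab+ba, c²` of `A`, as elements of the center. -/
noncomputable def centerGen : Fin 4 → Subalgebra.center k (CdvAlgebra k) :=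
  ![⟨cdvGen k 0 * cdvGen k 0, Subalgebra.mem_center_iff.mpr fun y => (comm_aa k y).symm⟩,
    ⟨cdvGen k 1 * cdvGen k 1, Subalgebra.mem_center_iff.mpr fun y => (comm_bb k y).symm⟩,
    ⟨cdvGen k 0 * cdvGen k 1 + cdvGen k 1 * cdvGen k 0,
      Subalgebra.mem_center_iff.mpr fun y => (comm_z k y).symm⟩,
    ⟨cdvGen k 2 * cdvGen k 2, Subalgebra.mem_center_iff.mpr fun y => (comm_cc k y).symm⟩]

/-- `k[x,y,z,t] → A`, sending `x,y,z,t` to `a², b², ab+ba, c²`. -/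
noncomputable def bigF : MvPolynomial (Fin 4) k →ₐ[k] CdvAlgebra k :=
  (Subalgebra.center k (CdvAlgebra k)).val.comp (aeval (centerGen k))

lemma bigF_X (i : Fin 4) : bigF k (X i) = (centerGen k i : CdvAlgebra k) := by
  simp [bigF]

lemma bigF_rel : bigF k (X 2 ^ 2 - 4 * X 0 * X 1 - 4 * X 3 ^ 3) = 0 := by
  have h := cdv_id_main (cdvGen k 0) (cdvGen k 1) (cdvGen k 2) _ _ _ rfl rfl rfl
  rw [rel_u, rel_v, rel_w] at h
  have h0 : (cdvGen k 0 * cdvGen k 1 + cdvGen k 1 * cdvGen k 0)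
        * (cdvGen k 0 * cdvGen k 1 + cdvGen k 1 * cdvGen k 0)
      - 4*(cdvGen k 0 * cdvGen k 0 * (cdvGen k 1 * cdvGen k 1))
      - 4*(cdvGen k 2 * cdvGen k 2 * (cdvGen k 2 * cdvGen k 2 * (cdvGen k 2 * cdvGen k 2))) = 0 := by
    simpa using h
  have e : bigF k (X 2 ^ 2 - 4 * X 0 * X 1 - 4 * X 3 ^ 3)
      = (cdvGen k 0 * cdvGen k 1 + cdvGen k 1 * cdvGen k 0)
          * (cdvGen k 0 * cdvGen k 1 + cdvGen k 1 * cdvGen k 0)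
        - 4*(cdvGen k 0 * cdvGen k 0 * (cdvGen k 1 * cdvGen k 1))
        - 4*(cdvGen k 2 * cdvGen k 2 * (cdvGen k 2 * cdvGen k 2 * (cdvGen k 2 * cdvGen k 2))) := by
    simp only [map_sub, map_mul, map_pow, map_ofNat, bigF_X]
    simp only [centerGen]
    simp [Matrix.cons_val_zero, Matrix.cons_val_one]
    noncomm_ring
  rw [e, h0]

/-- The map `Z = k[x,y,z,t]/(z²-4xy-4t³) → A`. -/
noncomputable def fA : CdvBase k →ₐ[k] CdvAlgebra k :=
  Ideal.Quotient.liftₐ _ (bigF k) (by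
    intro p hp
    rw [Ideal.mem_span_singleton] at hp
    obtain ⟨q, rfl⟩ := hp
    rw [map_mul, bigF_rel, zero_mul])

lemma fA_mk (p : MvPolynomial (Fin 4) k) : fA k (Ideal.Quotient.mk _ p) = bigF k p := by
  simp [fA]
  rfl

lemma fA_gen (i : Fin 4) : fA k (cdvBaseGen k i) = (centerGen k i : CdvAlgebra k) := by
  rw [cdvBaseGen, fA_mk, bigF_X]

lemma fA_central (r : CdvBase k) (y : CdvAlgebra k) : fA k r * y = y * fA k r := by
  obtain ⟨p, rfl⟩ := Ideal.Quotient.mk_surjective r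
  rw [fA_mk]
  have : bigF k p ∈ Subalgebra.center k (CdvAlgebra k) := by
    rw [bigF]
    exact ((aeval (centerGen k)) p).2
  exact (Subalgebra.mem_center_iff.mp this y).symm

lemma fA_gen0 : fA k (cdvBaseGen k 0) = cdvGen k 0 * cdvGen k 0 := by
  rw [fA_gen]; rfl
lemma fA_gen1 : fA k (cdvBaseGen k 1) = cdvGen k 1 * cdvGen k 1 := by
  rw [fA_gen]; rfl
lemma fA_gen2 : fA k (cdvBaseGen k 2) = cdvGen k 0 * cdvGen k 1 + cdvGen k 1 * cdvGen k 0 := by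
  rw [fA_gen]; rfl
lemma fA_gen3 : fA k (cdvBaseGen k 3) = cdvGen k 2 * cdvGen k 2 := by
  rw [fA_gen]; rfl

lemma mv_sq (α β γ : CdvBase k) :
    (fA k α * cdvGen k 0 + fA k β * cdvGen k 1 + fA k γ * cdvGen k 2)
      * (fA k α * cdvGen k 0 + fA k β * cdvGen k 1 + fA k γ * cdvGen k 2)
    = fA k (cdvBaseGen k 0 * α^2 + cdvBaseGen k 2 * α * β
        + cdvBaseGen k 1 * β^2 + cdvBaseGen k 3 * γ^2) := by
  rw [cdv_expand_sq _ _ _ _ _ _ (fA_central k α) (fA_central k β) (fA_central k γ)]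
  rw [rel_v, rel_w]
  simp only [map_add, map_mul, map_pow, fA_gen0, fA_gen1, fA_gen2, fA_gen3, pow_two, mul_zero,
    add_zero, map_mul]
  rw [show fA k α * fA k β * (cdvGen k 0 * cdvGen k 1 + cdvGen k 1 * cdvGen k 0)
        = (cdvGen k 0 * cdvGen k 1 + cdvGen k 1 * cdvGen k 0) * (fA k α * fA k β) by
      rw [← map_mul]; exact fA_central k _ _,
    show fA k α * fA k α * (cdvGen k 0 * cdvGen k 0)
        = cdvGen k 0 * cdvGen k 0 * (fA k α * fA k α) by
      rw [← map_mul]; exact fA_central k _ _,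
    show fA k β * fA k β * (cdvGen k 1 * cdvGen k 1)
        = cdvGen k 1 * cdvGen k 1 * (fA k β * fA k β) by
      rw [← map_mul]; exact fA_central k _ _,
    show fA k γ * fA k γ * (cdvGen k 2 * cdvGen k 2)
        = cdvGen k 2 * cdvGen k 2 * (fA k γ * fA k γ) by
      rw [← map_mul]; exact fA_central k _ _]
  noncomm_ring

end CdvAux

set_option maxHeartbeats 4000000 in
/-- There is a surjective `k`-algebra homomorphism `φ : Cl(Q) → A` with
`φ(ι(e₀)) = a`, `φ(ι(e₁)) = b`, `φ(ι(e₂)) = c`, whose kernel is the two-sided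
ideal generated by `ι(e₀)ι(e₁) - ι(e₁)ι(e₀) - 2ι(e₂)³`; consequently `A` is
isomorphic as a `k`-algebra to `Cl(Q)/(ab - ba - 2c³)`. -/
theorem clifford_surjection_onto_cdvAlgebra (k : Type*) [Field k] [CharZero k]
    (Q : QuadraticForm (CdvBase k) (Fin 3 → CdvBase k))
    (hQ : ∀ v : Fin 3 → CdvBase k,
      Q v = cdvBaseGen k 0 * v 0 ^ 2 + cdvBaseGen k 2 * v 0 * v 1
        + cdvBaseGen k 1 * v 1 ^ 2 + cdvBaseGen k 3 * v 2 ^ 2) :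
    letI g : CliffordAlgebra Q :=
      CliffordAlgebra.ι Q (Pi.single 0 1) * CliffordAlgebra.ι Q (Pi.single 1 1)
        - CliffordAlgebra.ι Q (Pi.single 1 1) * CliffordAlgebra.ι Q (Pi.single 0 1)
        - 2 * CliffordAlgebra.ι Q (Pi.single 2 1) ^ 3
    (∃ φ : CliffordAlgebra Q →ₐ[k] CdvAlgebra k,
      Function.Surjective φ ∧
      φ (CliffordAlgebra.ι Q (Pi.single 0 1)) = cdvGen k 0 ∧
      φ (CliffordAlgebra.ι Q (Pi.single 1 1)) = cdvGen k 1 ∧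
      φ (CliffordAlgebra.ι Q (Pi.single 2 1)) = cdvGen k 2 ∧
      ∀ x : CliffordAlgebra Q, φ x = 0 ↔ x ∈ TwoSidedIdeal.span {g}) ∧
    Nonempty
      ((RingQuot fun p q : CliffordAlgebra Q => p = g ∧ q = 0) ≃ₐ[k]
        CdvAlgebra k) := by
  set g : CliffordAlgebra Q :=
    CliffordAlgebra.ι Q (Pi.single 0 1) * CliffordAlgebra.ι Q (Pi.single 1 1)
      - CliffordAlgebra.ι Q (Pi.single 1 1) * CliffordAlgebra.ι Q (Pi.single 0 1)
      - 2 * CliffordAlgebra.ι Q (Pi.single 2 1) ^ 3 with hg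
  -- anticommutation relations in the Clifford algebra
  have h01 : CliffordAlgebra.ι Q (Pi.single 0 1) * CliffordAlgebra.ι Q (Pi.single 1 1)
      + CliffordAlgebra.ι Q (Pi.single 1 1) * CliffordAlgebra.ι Q (Pi.single 0 1)
      = algebraMap (CdvBase k) (CliffordAlgebra Q) (cdvBaseGen k 2) := by
    rw [CliffordAlgebra.ι_mul_ι_add_swap]
    congr 1
    show Q (Pi.single 0 1 + Pi.single 1 1) - Q (Pi.single 0 1) - Q (Pi.single 1 1) = _
    rw [hQ, hQ, hQ]
    simp only [Pi.add_apply, Pi.single_eq_same,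
      Pi.single_eq_of_ne (by decide : (0:Fin 3) ≠ 1),
      Pi.single_eq_of_ne (by decide : (1:Fin 3) ≠ 0),
      Pi.single_eq_of_ne (by decide : (0:Fin 3) ≠ 2),
      Pi.single_eq_of_ne (by decide : (1:Fin 3) ≠ 2),
      Pi.single_eq_of_ne (by decide : (2:Fin 3) ≠ 0),
      Pi.single_eq_of_ne (by decide : (2:Fin 3) ≠ 1)]
    ring
  have h02 : CliffordAlgebra.ι Q (Pi.single 0 1) * CliffordAlgebra.ι Q (Pi.single 2 1)
      + CliffordAlgebra.ι Q (Pi.single 2 1) * CliffordAlgebra.ι Q (Pi.single 0 1) = 0 := by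
    rw [CliffordAlgebra.ι_mul_ι_add_swap]
    have e : QuadraticMap.polar Q (Pi.single 0 1) (Pi.single 2 1) = 0 := by
      show Q (Pi.single 0 1 + Pi.single 2 1) - Q (Pi.single 0 1) - Q (Pi.single 2 1) = 0
      rw [hQ, hQ, hQ]
      simp only [Pi.add_apply, Pi.single_eq_same,
        Pi.single_eq_of_ne (by decide : (0:Fin 3) ≠ 1),
        Pi.single_eq_of_ne (by decide : (1:Fin 3) ≠ 0),
        Pi.single_eq_of_ne (by decide : (0:Fin 3) ≠ 2),
        Pi.single_eq_of_ne (by decide : (1:Fin 3) ≠ 2),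
        Pi.single_eq_of_ne (by decide : (2:Fin 3) ≠ 0),
        Pi.single_eq_of_ne (by decide : (2:Fin 3) ≠ 1)]
      ring
    rw [e, map_zero]
  have h12 : CliffordAlgebra.ι Q (Pi.single 1 1) * CliffordAlgebra.ι Q (Pi.single 2 1)
      + CliffordAlgebra.ι Q (Pi.single 2 1) * CliffordAlgebra.ι Q (Pi.single 1 1) = 0 := by
    rw [CliffordAlgebra.ι_mul_ι_add_swap]
    have e : QuadraticMap.polar Q (Pi.single 1 1) (Pi.single 2 1) = 0 := by
      show Q (Pi.single 1 1 + Pi.single 2 1) - Q (Pi.single 1 1) - Q (Pi.single 2 1) = 0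
      rw [hQ, hQ, hQ]
      simp only [Pi.add_apply, Pi.single_eq_same,
        Pi.single_eq_of_ne (by decide : (0:Fin 3) ≠ 1),
        Pi.single_eq_of_ne (by decide : (1:Fin 3) ≠ 0),
        Pi.single_eq_of_ne (by decide : (0:Fin 3) ≠ 2),
        Pi.single_eq_of_ne (by decide : (1:Fin 3) ≠ 2),
        Pi.single_eq_of_ne (by decide : (2:Fin 3) ≠ 0),
        Pi.single_eq_of_ne (by decide : (2:Fin 3) ≠ 1)]
      ring
    rw [e, map_zero]
  -- `A` as an algebra over `Z`
  letI instZA : Algebra (CdvBase k) (CdvAlgebra k) :=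
    RingHom.toAlgebra' (CdvAux.fA k).toRingHom (fun r x => CdvAux.fA_central k r x)
  haveI tower : IsScalarTower k (CdvBase k) (CdvAlgebra k) :=
    IsScalarTower.of_algebraMap_eq' (AlgHom.comp_algebraMap (CdvAux.fA k)).symm
  have halgmap : ∀ r : CdvBase k,
      algebraMap (CdvBase k) (CdvAlgebra k) r = CdvAux.fA k r := fun r => rfl
  -- the `Z`-linear map defining `φ`
  letI mv : (Fin 3 → CdvBase k) →ₗ[CdvBase k] CdvAlgebra k :=
    { toFun := fun v => CdvAux.fA k (v 0) * cdvGen k 0 + CdvAux.fA k (v 1) * cdvGen k 1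
        + CdvAux.fA k (v 2) * cdvGen k 2
      map_add' := by
        intro v w
        simp only [Pi.add_apply, map_add, add_mul]
        abel
      map_smul' := by
        intro r v
        simp only [Pi.smul_apply, smul_eq_mul, map_mul, RingHom.id_apply]
        rw [Algebra.smul_def, halgmap, mul_add, mul_add]
        simp only [mul_assoc] }
  have hcond : ∀ v : Fin 3 → CdvBase k,
      mv v * mv v = algebraMap (CdvBase k) (CdvAlgebra k) (Q v) := by
    intro v
    rw [hQ v, halgmap]
    show (CdvAux.fA k (v 0) * cdvGen k 0 + CdvAux.fA k (v 1) * cdvGen k 1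
        + CdvAux.fA k (v 2) * cdvGen k 2)
      * (CdvAux.fA k (v 0) * cdvGen k 0 + CdvAux.fA k (v 1) * cdvGen k 1
        + CdvAux.fA k (v 2) * cdvGen k 2) = _
    rw [CdvAux.mv_sq k (v 0) (v 1) (v 2)]
  letI φZ : CliffordAlgebra Q →ₐ[CdvBase k] CdvAlgebra k :=
    CliffordAlgebra.lift Q ⟨mv, hcond⟩
  letI φ : CliffordAlgebra Q →ₐ[k] CdvAlgebra k := φZ.restrictScalars k
  have hφmk : ∀ x, φ x = φZ x := fun x => rfl
  have hι : ∀ i : Fin 3, φ (CliffordAlgebra.ι Q (Pi.single i 1)) = cdvGen k i := by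
    intro i
    rw [hφmk, CliffordAlgebra.lift_ι_apply]
    have hmv : ∀ v : Fin 3 → CdvBase k, mv v
        = CdvAux.fA k (v 0) * cdvGen k 0 + CdvAux.fA k (v 1) * cdvGen k 1
          + CdvAux.fA k (v 2) * cdvGen k 2 := fun _ => rfl
    rw [hmv]
    fin_cases i <;>
      simp [Pi.single_apply, map_one, map_zero, one_mul, zero_mul]
  -- surjectivity of φ
  have hsurj : Function.Surjective φ := by
    intro y
    obtain ⟨p, rfl⟩ := RingQuot.mkAlgHom_surjective k (CdvRel k) y
    induction p using FreeAlgebra.induction with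
    | grade0 r =>
        exact ⟨algebraMap k _ r, by rw [AlgHom.commutes, AlgHom.commutes]⟩
    | grade1 i => exact ⟨CliffordAlgebra.ι Q (Pi.single i 1), hι i⟩
    | mul p q hp hq =>
        obtain ⟨x, hx⟩ := hp
        obtain ⟨y, hy⟩ := hq
        exact ⟨x * y, by rw [map_mul, hx, hy, map_mul]⟩
    | add p q hp hq =>
        obtain ⟨x, hx⟩ := hp
        obtain ⟨y, hy⟩ := hq
        exact ⟨x + y, by rw [map_add, hx, hy, map_add]⟩
  -- φ kills g
  have hφg : φ g = 0 := by
    rw [hg]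
    simp only [map_sub, map_mul, map_pow, map_ofNat, hι]
    exact CdvAux.rel_u k
  -- the quotient of the Clifford algebra and the maps
  letI relg : CliffordAlgebra Q → CliffordAlgebra Q → Prop := fun p q => p = g ∧ q = 0
  letI π : CliffordAlgebra Q →ₐ[k] RingQuot relg := RingQuot.mkAlgHom k relg
  have hπg : π g = 0 := by
    have h := RingQuot.mkAlgHom_rel k (show relg g 0 from ⟨rfl, rfl⟩)
    simpa using h
  letI ψ0 : FreeAlgebra k (Fin 3) →ₐ[k] RingQuot relg :=
    FreeAlgebra.lift k fun i => π (CliffordAlgebra.ι Q (Pi.single i 1))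
  have hψ0ι : ∀ i, ψ0 (FreeAlgebra.ι k i) = π (CliffordAlgebra.ι Q (Pi.single i 1)) :=
    fun i => FreeAlgebra.lift_ι_apply _ i
  have hψ0rel : ∀ ⦃x y⦄, CdvRel k x y → ψ0 x = ψ0 y := by
    intro x y h
    cases h with
    | ac =>
        rw [map_add, map_mul, map_mul, hψ0ι, hψ0ι, ← map_mul π, ← map_mul π, ← map_add π,
          h02, map_zero, map_zero]
    | bc =>
        rw [map_add, map_mul, map_mul, hψ0ι, hψ0ι, ← map_mul π, ← map_mul π, ← map_add π,
          h12, map_zero, map_zero]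
    | ab =>
        rw [map_zero, map_sub, map_sub, map_mul, map_mul, map_mul, map_pow, map_ofNat,
          hψ0ι, hψ0ι, hψ0ι, ← map_mul π, ← map_mul π, ← map_pow π, ← map_ofNat π 2,
          ← map_mul π, ← map_sub π, ← map_sub π, ← hg, hπg]
  letI ψ : CdvAlgebra k →ₐ[k] RingQuot relg := RingQuot.liftAlgHom k ⟨ψ0, hψ0rel⟩
  have hψgen : ∀ i, ψ (cdvGen k i) = π (CliffordAlgebra.ι Q (Pi.single i 1)) := by
    intro i
    rw [cdvGen, RingQuot.liftAlgHom_mkAlgHom_apply, hψ0ι]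
  letI φ' : RingQuot relg →ₐ[k] CdvAlgebra k :=
    RingQuot.liftAlgHom k ⟨φ, by rintro x y ⟨rfl, rfl⟩; rw [hφg, map_zero]⟩
  have hφ'π : ∀ x, φ' (π x) = φ x := fun x => RingQuot.liftAlgHom_mkAlgHom_apply k _ _ x
  -- the Clifford algebra is generated over k by the three generators
  have hadj : ∀ x : CliffordAlgebra Q, x ∈ Algebra.adjoin k
      ({CliffordAlgebra.ι Q (Pi.single 0 1), CliffordAlgebra.ι Q (Pi.single 1 1),
        CliffordAlgebra.ι Q (Pi.single 2 1)} : Set (CliffordAlgebra Q)) := by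
    set S := Algebra.adjoin k
      ({CliffordAlgebra.ι Q (Pi.single 0 1), CliffordAlgebra.ι Q (Pi.single 1 1),
        CliffordAlgebra.ι Q (Pi.single 2 1)} : Set (CliffordAlgebra Q)) with hS
    have hgen : ∀ i : Fin 3, CliffordAlgebra.ι Q (Pi.single i 1) ∈ S := by
      intro i
      apply Algebra.subset_adjoin
      fin_cases i <;> simp
    have hxt : ∀ i : Fin 3, algebraMap (CdvBase k) (CliffordAlgebra Q)
        (Q (Pi.single i 1)) ∈ S := by
      intro i
      rw [← CliffordAlgebra.ι_sq_scalar]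
      exact S.mul_mem (hgen i) (hgen i)
    have hx0 : algebraMap (CdvBase k) (CliffordAlgebra Q) (cdvBaseGen k 0) ∈ S := by
      have e : Q (Pi.single 0 1) = cdvBaseGen k 0 := by
        rw [hQ]
        simp only [Pi.add_apply, Pi.single_eq_same,
          Pi.single_eq_of_ne (by decide : (0:Fin 3) ≠ 1),
          Pi.single_eq_of_ne (by decide : (1:Fin 3) ≠ 0),
          Pi.single_eq_of_ne (by decide : (0:Fin 3) ≠ 2),
          Pi.single_eq_of_ne (by decide : (1:Fin 3) ≠ 2),
          Pi.single_eq_of_ne (by decide : (2:Fin 3) ≠ 0),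
          Pi.single_eq_of_ne (by decide : (2:Fin 3) ≠ 1)]
        ring
      rw [← e]; exact hxt 0
    have hx1 : algebraMap (CdvBase k) (CliffordAlgebra Q) (cdvBaseGen k 1) ∈ S := by
      have e : Q (Pi.single 1 1) = cdvBaseGen k 1 := by
        rw [hQ]
        simp only [Pi.add_apply, Pi.single_eq_same,
          Pi.single_eq_of_ne (by decide : (0:Fin 3) ≠ 1),
          Pi.single_eq_of_ne (by decide : (1:Fin 3) ≠ 0),
          Pi.single_eq_of_ne (by decide : (0:Fin 3) ≠ 2),
          Pi.single_eq_of_ne (by decide : (1:Fin 3) ≠ 2),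
          Pi.single_eq_of_ne (by decide : (2:Fin 3) ≠ 0),
          Pi.single_eq_of_ne (by decide : (2:Fin 3) ≠ 1)]
        ring
      rw [← e]; exact hxt 1
    have hx3 : algebraMap (CdvBase k) (CliffordAlgebra Q) (cdvBaseGen k 3) ∈ S := by
      have e : Q (Pi.single 2 1) = cdvBaseGen k 3 := by
        rw [hQ]
        simp only [Pi.add_apply, Pi.single_eq_same,
          Pi.single_eq_of_ne (by decide : (0:Fin 3) ≠ 1),
          Pi.single_eq_of_ne (by decide : (1:Fin 3) ≠ 0),
          Pi.single_eq_of_ne (by decide : (0:Fin 3) ≠ 2),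
          Pi.single_eq_of_ne (by decide : (1:Fin 3) ≠ 2),
          Pi.single_eq_of_ne (by decide : (2:Fin 3) ≠ 0),
          Pi.single_eq_of_ne (by decide : (2:Fin 3) ≠ 1)]
        ring
      rw [← e]; exact hxt 2
    have hx2 : algebraMap (CdvBase k) (CliffordAlgebra Q) (cdvBaseGen k 2) ∈ S := by
      rw [← h01]
      exact S.add_mem (S.mul_mem (hgen 0) (hgen 1)) (S.mul_mem (hgen 1) (hgen 0))
    have hZ : ∀ r : CdvBase k, algebraMap (CdvBase k) (CliffordAlgebra Q) r ∈ S := by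
      intro r
      obtain ⟨p, rfl⟩ := Ideal.Quotient.mk_surjective r
      induction p using MvPolynomial.induction_on with
      | C a =>
          have e : (Ideal.Quotient.mk _ (C a : MvPolynomial (Fin 4) k))
              = algebraMap k (CdvBase k) a := rfl
          rw [e, ← IsScalarTower.algebraMap_apply k (CdvBase k) (CliffordAlgebra Q)]
          exact S.algebraMap_mem a
      | add p q hp hq =>
          rw [map_add, map_add]
          exact S.add_mem hp hq
      | mul_X p n hp =>
          rw [map_mul, map_mul]
          refine S.mul_mem hp ?_
          fin_cases n
          · exact hx0
          · exact hx1
          · exact hx2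
          · exact hx3
    intro x
    induction x using CliffordAlgebra.induction with
    | algebraMap r => exact hZ r
    | ι v =>
        have hv : CliffordAlgebra.ι Q v
            = algebraMap (CdvBase k) (CliffordAlgebra Q) (v 0)
                * CliffordAlgebra.ι Q (Pi.single 0 1)
              + algebraMap (CdvBase k) (CliffordAlgebra Q) (v 1)
                * CliffordAlgebra.ι Q (Pi.single 1 1)
              + algebraMap (CdvBase k) (CliffordAlgebra Q) (v 2)
                * CliffordAlgebra.ι Q (Pi.single 2 1) := by
          have hv' : v = v 0 • (Pi.single 0 1 : Fin 3 → CdvBase k)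
              + v 1 • (Pi.single 1 1 : Fin 3 → CdvBase k)
              + v 2 • (Pi.single 2 1 : Fin 3 → CdvBase k) := by
            funext j
            fin_cases j <;>
              simp only [Fin.zero_eta, Fin.mk_one, Fin.reduceFinMk, Fin.isValue,
                Pi.add_apply, Pi.smul_apply, Pi.single_eq_same, smul_eq_mul,
                Pi.single_eq_of_ne (by decide : (0:Fin 3) ≠ 1),
                Pi.single_eq_of_ne (by decide : (1:Fin 3) ≠ 0),
                Pi.single_eq_of_ne (by decide : (0:Fin 3) ≠ 2),
                Pi.single_eq_of_ne (by decide : (1:Fin 3) ≠ 2),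
                Pi.single_eq_of_ne (by decide : (2:Fin 3) ≠ 0),
                Pi.single_eq_of_ne (by decide : (2:Fin 3) ≠ 1),
                mul_one, mul_zero, add_zero, zero_add]
          conv_lhs => rw [hv']
          rw [map_add, map_add, map_smul, map_smul, map_smul]
          exact congrArg₂ (· + ·) (congrArg₂ (· + ·)
            (Algebra.smul_def (v 0) (CliffordAlgebra.ι Q (Pi.single 0 1)))
            (Algebra.smul_def (v 1) (CliffordAlgebra.ι Q (Pi.single 1 1))))
            (Algebra.smul_def (v 2) (CliffordAlgebra.ι Q (Pi.single 2 1)))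
        rw [hv]
        exact S.add_mem (S.add_mem (S.mul_mem (hZ _) (hgen 0)) (S.mul_mem (hZ _) (hgen 1)))
          (S.mul_mem (hZ _) (hgen 2))
    | mul a b ha hb => exact S.mul_mem ha hb
    | add a b ha hb => exact S.add_mem ha hb
  -- ψ ∘ φ = π
  have hψφ : ∀ x : CliffordAlgebra Q, ψ (φ x) = π x := by
    intro x
    refine Algebra.adjoin_induction
      (p := fun y _ => ψ (φ y) = π y) ?_ ?_ ?_ ?_ (hadj x)
    · intro y hy
      rcases hy with rfl | rfl | rfl
      · rw [hι 0, hψgen 0]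
      · rw [hι 1, hψgen 1]
      · rw [hι 2, hψgen 2]
    · intro r
      rw [AlgHom.commutes, AlgHom.commutes, AlgHom.commutes]
    · intro p q _ _ hp hq
      rw [map_add, map_add, map_add, hp, hq]
    · intro p q _ _ hp hq
      rw [map_mul, map_mul, map_mul, hp, hq]
  -- φ' ∘ ψ = id
  have hφ'ψ : ∀ y : CdvAlgebra k, φ' (ψ y) = y := by
    intro y
    obtain ⟨p, rfl⟩ := RingQuot.mkAlgHom_surjective k (CdvRel k) y
    rw [RingQuot.liftAlgHom_mkAlgHom_apply]
    induction p using FreeAlgebra.induction with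
    | grade0 r => rw [AlgHom.commutes, AlgHom.commutes, AlgHom.commutes]
    | grade1 i =>
        rw [hψ0ι, hφ'π, hι]
        rfl
    | mul p q hp hq => rw [map_mul, map_mul, map_mul, hp, hq]
    | add p q hp hq => rw [map_add, map_add, map_add, hp, hq]
  have hψφ' : ∀ b, ψ (φ' b) = b := by
    intro b
    obtain ⟨x, rfl⟩ := RingQuot.mkAlgHom_surjective k relg b
    rw [show RingQuot.mkAlgHom k relg x = π x from rfl, hφ'π, hψφ]
  -- the kernel computation
  have hker : ∀ x : CliffordAlgebra Q, φ x = 0 ↔ x ∈ TwoSidedIdeal.span {g} := by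
    intro x
    constructor
    · intro hx
      have hπx : π x = 0 := by
        have h := hψφ x
        rwa [hx, map_zero, eq_comm] at h
      letI I : TwoSidedIdeal (CliffordAlgebra Q) := TwoSidedIdeal.span {g}
      have hgI : g ∈ I := TwoSidedIdeal.subset_span (Set.mem_singleton g)
      have hrel : I.ringCon g 0 := by
        rw [TwoSidedIdeal.rel_iff]
        simpa using hgI
      letI ρ : RingQuot relg →+* I.ringCon.Quotient :=
        RingQuot.lift ⟨I.ringCon.mk', by
          rintro p q ⟨rfl, rfl⟩
          exact RingCon.eq _ |>.mpr hrel⟩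
      have hρ : ∀ z : CliffordAlgebra Q, ρ (π z) = I.ringCon.mk' z := by
        intro z
        have : π z = RingQuot.mkRingHom relg z := by
          rw [← RingQuot.mkAlgHom_coe k relg]; rfl
        rw [this, RingQuot.lift_mkRingHom_apply]
      have h0 : I.ringCon.mk' x = I.ringCon.mk' 0 := by
        rw [← hρ x, hπx, map_zero, map_zero]
      exact (TwoSidedIdeal.mem_iff _ _).mpr ((RingCon.eq _).mp h0)
    · intro hx
      have h := TwoSidedIdeal.mem_span_iff.mp hx
        (TwoSidedIdeal.ker (φ : CliffordAlgebra Q →+* CdvAlgebra k))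
        (by
          intro y hy
          rw [Set.mem_singleton_iff] at hy
          subst hy
          exact (TwoSidedIdeal.mem_ker _).mpr hφg)
      exact (TwoSidedIdeal.mem_ker _).mp h
  exact ⟨⟨φ, hsurj, hι 0, hι 1, hι 2, hker⟩,
    ⟨AlgEquiv.ofAlgHom φ' ψ (AlgHom.ext hφ'ψ) (AlgHom.ext hψφ')⟩⟩
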